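/- arXiv:2207.03669 — 3 statements merged into one kernel-verified Lean document; each statement's English description precedes it below -/
import Mathlib

section
/- For any formula φ in basic multimodal logic, there exists an equivalent formula in disjunctive box normal form: φ ≡ ⋁_{m=1}^{M} (α_m ∧ ⋀_{a∈A} □_a φ_m^a), where each α_m belongs to L₀, each disjunct is satisfiable, and each φ_m^a can be chosen with modal depth strictly less than that of φ (when the depth of φ is positive) and (up to equivalence) from the closure of φ under subformulas and single negations together with ⊤. -/
/-- Modal formulas over label set `A` and proposition set `P`. -/
inductive Form (A P : Type) : Type
  | top : Form A P
  | atom : P → Form A P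
  | neg : Form A P → Form A P
  | or : Form A P → Form A P → Form A P
  | dia : A → Form A P → Form A P

namespace Form
variable {A P : Type}
def and (φ ψ : Form A P) : Form A P := Form.neg ((Form.neg φ).or (Form.neg ψ))
def box (a : A) (φ : Form A P) : Form A P := Form.neg (Form.dia a (Form.neg φ))
def bot : Form A P := Form.neg Form.top
def imp (φ ψ : Form A P) : Form A P := (Form.neg φ).or ψ
end Form

/-- Kripke models. -/
structure Kripke (A P : Type) : Type 1 where
  W : Type
  val : W → P → Prop
  rel : A → W → W → Prop
  actual : Set W

variable {A P : Type}

/-- Satisfaction of a modal formula at a world. -/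
def sat (M : Kripke A P) : M.W → Form A P → Prop
  | _, .top => True
  | w, .atom p => M.val w p
  | w, .neg φ => ¬ sat M w φ
  | w, .or φ ψ => sat M w φ ∨ sat M w ψ
  | w, .dia a φ => ∃ v, M.rel a w v ∧ sat M v φ

/-- Semantic entailment over all Kripke models. -/
def entails (φ ψ : Form A P) : Prop := ∀ (M : Kripke A P) (w : M.W), sat M w φ → sat M w ψ

/-- Semantic equivalence. -/
def equivF (φ ψ : Form A P) : Prop := entails φ ψ ∧ entails ψ φ

def satisfiable (φ : Form A P) : Prop := ∃ (M : Kripke A P) (w : M.W), sat M w φ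

def valid (φ : Form A P) : Prop := ∀ (M : Kripke A P) (w : M.W), sat M w φ

/-- Finite disjunction (empty disjunction is `⊥`). -/
def bigOr : List (Form A P) → Form A P
  | [] => Form.bot
  | φ :: l => φ.or (bigOr l)

/-- Finite conjunction (empty conjunction is `⊤`). -/
def bigAnd : List (Form A P) → Form A P
  | [] => Form.top
  | φ :: l => φ.and (bigAnd l)

/-- `⋀_{a ∈ A} □_a (ξ a)` for a finite label set `A`. -/
noncomputable def boxConj [Fintype A] (ξ : A → Form A P) : Form A P :=
  bigAnd ((Finset.univ : Finset A).toList.map fun a => Form.box a (ξ a))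

/-- `R` is a bisimulation between Kripke models `M` and `N`. -/
def IsBisim (M N : Kripke A P) (R : M.W → N.W → Prop) : Prop :=
  ∀ w v, R w v →
    ((∀ p, M.val w p ↔ N.val v p) ∧
     (∀ a w', M.rel a w w' → ∃ v', N.rel a v v' ∧ R w' v') ∧
     (∀ a v', N.rel a v v' → ∃ w', M.rel a w w' ∧ R w' v'))

/-- Pointed bisimilarity of Kripke models (Zig0/Zag0 on actual worlds). -/
def Bisimilar (M N : Kripke A P) : Prop :=
  ∃ R, IsBisim M N R ∧ (∀ w ∈ M.actual, ∃ v ∈ N.actual, R w v) ∧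
       (∀ v ∈ N.actual, ∃ w ∈ M.actual, R w v)

/-- Action models. -/
structure ActionModel (A P : Type) : Type 1 where
  E : Type
  pre : E → Form A P
  rel : A → E → E → Prop
  actual : Set E

/-- The update product `M ⊗ 𝔄`. -/
def update (M : Kripke A P) (𝔄 : ActionModel A P) : Kripke A P where
  W := {p : M.W × 𝔄.E // sat M p.1 (𝔄.pre p.2)}
  val w p := M.val w.1.1 p
  rel a w v := M.rel a w.1.1 v.1.1 ∧ 𝔄.rel a w.1.2 v.1.2
  actual := {w | w.1.1 ∈ M.actual ∧ w.1.2 ∈ 𝔄.actual}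

/-- Action model equivalence: same updating effect (up to bisimilarity) on every Kripke model. -/
def AMEquiv (𝔄 𝔅 : ActionModel A P) : Prop :=
  ∀ M : Kripke A P, Bisimilar (update M 𝔄) (update M 𝔅)

/-- `S` is an action bisimulation between action models `𝔄` and `𝔅`. -/
def IsActBisim (𝔄 𝔅 : ActionModel A P) (S : 𝔄.E → 𝔅.E → Prop) : Prop :=
  ∀ x y, S x y →
    (equivF (𝔄.pre x) (𝔅.pre y) ∧
     (∀ a x', 𝔄.rel a x x' → satisfiable ((𝔄.pre x).and (Form.dia a (𝔄.pre x'))) →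
        ∃ y', 𝔅.rel a y y' ∧ S x' y') ∧
     (∀ a y', 𝔅.rel a y y' → satisfiable ((𝔅.pre y).and (Form.dia a (𝔅.pre y'))) →
        ∃ x', 𝔄.rel a x x' ∧ S x' y'))

/-- Action bisimilarity of action models (with Zig0/Zag0 on actual events). -/
def ActBisimilar (𝔄 𝔅 : ActionModel A P) : Prop :=
  ∃ S, IsActBisim 𝔄 𝔅 S ∧ (∀ x ∈ 𝔄.actual, ∃ y ∈ 𝔅.actual, S x y) ∧
       (∀ y ∈ 𝔅.actual, ∃ x ∈ 𝔄.actual, S x y)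

/-- Zig of the generalized action emulation:
`η(x,y) ⊨ □_a (Pre^𝔄(x') → ⋁_{y →_a y'} (Pre^𝔅(y') ∧ η(x',y')))`, rendered semantically. -/
def GAEZig (𝔄 𝔅 : ActionModel A P) (η : 𝔄.E → 𝔅.E → Form A P) : Prop :=
  ∀ (a : A) (x : 𝔄.E) (y : 𝔅.E) (x' : 𝔄.E), 𝔄.rel a x x' →
    ∀ (M : Kripke A P) (w v : M.W), sat M w (η x y) → M.rel a w v → sat M v (𝔄.pre x') →
      ∃ y', 𝔅.rel a y y' ∧ sat M v (𝔅.pre y') ∧ sat M v (η x' y')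

/-- Zag of the generalized action emulation. -/
def GAEZag (𝔄 𝔅 : ActionModel A P) (η : 𝔄.E → 𝔅.E → Form A P) : Prop :=
  ∀ (a : A) (x : 𝔄.E) (y : 𝔅.E) (y' : 𝔅.E), 𝔅.rel a y y' →
    ∀ (M : Kripke A P) (w v : M.W), sat M w (η x y) → M.rel a w v → sat M v (𝔅.pre y') →
      ∃ x', 𝔄.rel a x x' ∧ sat M v (𝔄.pre x') ∧ sat M v (η x' y')

/-- Zig0 of the generalized action emulation:
`Pre^𝔄(x) ⊨ ⋁_{y ∈ E₀^𝔅} (Pre^𝔅(y) ∧ η(x,y))` for actual `x`. -/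
def GAEZig0 (𝔄 𝔅 : ActionModel A P) (η : 𝔄.E → 𝔅.E → Form A P) : Prop :=
  ∀ x ∈ 𝔄.actual, ∀ (M : Kripke A P) (w : M.W), sat M w (𝔄.pre x) →
    ∃ y ∈ 𝔅.actual, sat M w (𝔅.pre y) ∧ sat M w (η x y)

/-- Zag0 of the generalized action emulation. -/
def GAEZag0 (𝔄 𝔅 : ActionModel A P) (η : 𝔄.E → 𝔅.E → Form A P) : Prop :=
  ∀ y ∈ 𝔅.actual, ∀ (M : Kripke A P) (w : M.W), sat M w (𝔅.pre y) →
    ∃ x ∈ 𝔄.actual, sat M w (𝔄.pre x) ∧ sat M w (η x y)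

/-- `η` is a generalized action emulation witnessing `𝔄 ⇄_G 𝔅`. -/
def IsGAE (𝔄 𝔅 : ActionModel A P) (η : 𝔄.E → 𝔅.E → Form A P) : Prop :=
  GAEZig 𝔄 𝔅 η ∧ GAEZag 𝔄 𝔅 η ∧ GAEZig0 𝔄 𝔅 η ∧ GAEZag0 𝔄 𝔅 η

/-- `S` is a propositional action emulation witnessing `𝔄 ⇄_P 𝔅`
(Consistency, Zig, Zag, Zig0, Zag0; disjunctions rendered semantically). -/
def IsPAEW (𝔄 𝔅 : ActionModel A P) (S : 𝔄.E → 𝔅.E → Prop) : Prop :=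
  (∀ x y, S x y → satisfiable ((𝔄.pre x).and (𝔅.pre y))) ∧
  (∀ (a : A) x y x', S x y → 𝔄.rel a x x' →
     ∀ (M : Kripke A P) (w : M.W), sat M w (𝔄.pre x') →
       ∃ y', 𝔅.rel a y y' ∧ S x' y' ∧ sat M w (𝔅.pre y')) ∧
  (∀ (a : A) x y y', S x y → 𝔅.rel a y y' →
     ∀ (M : Kripke A P) (w : M.W), sat M w (𝔅.pre y') →
       ∃ x', 𝔄.rel a x x' ∧ S x' y' ∧ sat M w (𝔄.pre x')) ∧
  (∀ x ∈ 𝔄.actual, ∀ (M : Kripke A P) (w : M.W), sat M w (𝔄.pre x) →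
     ∃ y ∈ 𝔅.actual, S x y ∧ sat M w (𝔅.pre y)) ∧
  (∀ y ∈ 𝔅.actual, ∀ (M : Kripke A P) (w : M.W), sat M w (𝔅.pre y) →
     ∃ x ∈ 𝔄.actual, S x y ∧ sat M w (𝔄.pre x))

/-- `S` is an action emulation witnessing `𝔄 ⇄ 𝔅`
(Consistency, Zig, Zag, Zig0, Zag0; disjunctions and boxes rendered semantically). -/
def IsAEW (𝔄 𝔅 : ActionModel A P) (S : 𝔄.E → 𝔅.E → Prop) : Prop :=
  (∀ x y, S x y → satisfiable ((𝔄.pre x).and (𝔅.pre y))) ∧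
  (∀ (a : A) x y x', S x y → 𝔄.rel a x x' →
     ∀ (M : Kripke A P) (w v : M.W), sat M w (𝔄.pre x) → sat M w (𝔅.pre y) →
       M.rel a w v → sat M v (𝔄.pre x') →
       ∃ y', 𝔅.rel a y y' ∧ S x' y' ∧ sat M v (𝔅.pre y')) ∧
  (∀ (a : A) x y y', S x y → 𝔅.rel a y y' →
     ∀ (M : Kripke A P) (w v : M.W), sat M w (𝔄.pre x) → sat M w (𝔅.pre y) →
       M.rel a w v → sat M v (𝔅.pre y') →
       ∃ x', 𝔄.rel a x x' ∧ S x' y' ∧ sat M v (𝔄.pre x')) ∧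
  (∀ x ∈ 𝔄.actual, ∀ (M : Kripke A P) (w : M.W), sat M w (𝔄.pre x) →
     ∃ y ∈ 𝔅.actual, S x y ∧ sat M w (𝔅.pre y)) ∧
  (∀ y ∈ 𝔅.actual, ∀ (M : Kripke A P) (w : M.W), sat M w (𝔅.pre y) →
     ∃ x ∈ 𝔄.actual, S x y ∧ sat M w (𝔄.pre x))

/-- `L₀`: formulas `α` such that if `α` is satisfiable and `α ⊨ □_a φ` then `φ` is valid. -/
def L0 : Set (Form A P) :=
  {α | satisfiable α → ∀ (a : A) (φ : Form A P), entails α (Form.box a φ) → valid φ}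

/-- `Φ` is `Ψ`-regular. -/
def Regular (Φ Ψ : Set (Form A P)) : Prop :=
  ∀ φ ∈ Φ, ∀ ψ ∈ Ψ, entails ψ φ ∨ entails ψ φ.neg

/-- `Φ` is `Ψ`-basis: every `φ ∈ Φ` is equivalent to a disjunction of a subset of `Ψ`
(disjunction rendered semantically). -/
def IsBasisFor (Φ Ψ : Set (Form A P)) : Prop :=
  ∀ φ ∈ Φ, ∃ Ψ' ⊆ Ψ, ∀ (M : Kripke A P) (w : M.W), sat M w φ ↔ ∃ ψ ∈ Ψ', sat M w ψ

/-- `Φ` is `Ψ`-discrete: if `φ ∈ Φ` entails a finite disjunction `⋁_l ⋀_a □_a ξ_l^a`, then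
`φ ⊨ ⋁_l ⋁ G(⋀_a □_a ξ_l^a, Ψ)` (outer disjunctions rendered semantically). -/
def Discrete [Fintype A] (Φ Ψ : Set (Form A P)) : Prop :=
  ∀ φ ∈ Φ, ∀ (L : ℕ) (ξ : Fin L → A → Form A P),
    entails φ (bigOr ((List.finRange L).map fun l => boxConj (ξ l))) →
    ∀ (M : Kripke A P) (w : M.W), sat M w φ →
      ∃ (l : Fin L), ∃ ψ ∈ Ψ, entails ψ (boxConj (ξ l)) ∧ sat M w ψ

/-- `Φ` is `Ψ`-known: if `φ ∈ Φ` and `φ ⊨ □_a ξ`, then `φ ⊨ □_a ⋁ G(ξ, Ψ)`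
(inner disjunction rendered semantically). -/
def Known (Φ Ψ : Set (Form A P)) : Prop :=
  ∀ φ ∈ Φ, ∀ (a : A) (χ : Form A P), entails φ (Form.box a χ) →
    ∀ (M : Kripke A P) (w v : M.W), sat M w φ → M.rel a w v →
      ∃ ψ ∈ Ψ, entails ψ χ ∧ sat M v ψ

/-- `R_a^𝔄(x)`. -/
def Rset (𝔄 : ActionModel A P) (a : A) (x : 𝔄.E) : Set 𝔄.E :=
  {y | satisfiable ((𝔄.pre x).and (Form.dia a (𝔄.pre y)))}

/-- `Q_a^𝔄(x)`. -/
def Qset (𝔄 : ActionModel A P) (a : A) (x : 𝔄.E) : Set 𝔄.E :=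
  {y | 𝔄.rel a x y ∧ satisfiable ((𝔄.pre x).and (Form.dia a (𝔄.pre y)))}

/-- Modal depth. -/
def depth : Form A P → ℕ
  | .top => 0
  | .atom _ => 0
  | .neg φ => depth φ
  | .or φ ψ => max (depth φ) (depth ψ)
  | .dia _ φ => depth φ + 1

/-- Subformulas. -/
def Subf : Form A P → List (Form A P)
  | .top => [.top]
  | .atom p => [.atom p]
  | .neg φ => .neg φ :: Subf φ
  | .or φ ψ => .or φ ψ :: (Subf φ ++ Subf ψ)
  | .dia a φ => .dia a φ :: Subf φ

/-- Single negation. -/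
def singleNeg : Form A P → Form A P
  | .neg φ => φ
  | φ => .neg φ

/-- Closure under subformulas and single negations. -/
def closureF (φ : Form A P) : Set (Form A P) :=
  {χ | χ ∈ Subf φ ∨ ∃ ψ ∈ Subf φ, χ = singleNeg ψ}

namespace BNF
variable {A P : Type}

lemma sat_neg {M : Kripke A P} {w : M.W} {ψ : Form A P} :
    sat M w (Form.neg ψ) ↔ ¬ sat M w ψ := Iff.rfl

lemma sat_or {M : Kripke A P} {w : M.W} {ψ χ : Form A P} :
    sat M w (Form.or ψ χ) ↔ sat M w ψ ∨ sat M w χ := Iff.rfl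

lemma sat_dia {M : Kripke A P} {w : M.W} {a : A} {ψ : Form A P} :
    sat M w (Form.dia a ψ) ↔ ∃ v, M.rel a w v ∧ sat M v ψ := Iff.rfl

lemma sat_top {M : Kripke A P} {w : M.W} : sat M w Form.top := trivial

lemma sat_and {M : Kripke A P} {w : M.W} {ψ χ : Form A P} :
    sat M w (ψ.and χ) ↔ sat M w ψ ∧ sat M w χ := by
  simp [Form.and, sat_neg, sat_or]

lemma sat_box {M : Kripke A P} {w : M.W} {a : A} {ψ : Form A P} :
    sat M w (Form.box a ψ) ↔ ∀ v, M.rel a w v → sat M v ψ := by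
  simp [Form.box, sat_neg, sat_dia]

lemma sat_bigAnd {M : Kripke A P} {w : M.W} {l : List (Form A P)} :
    sat M w (bigAnd l) ↔ ∀ ψ ∈ l, sat M w ψ := by
  induction l with
  | nil => simpa [bigAnd] using sat_top
  | cons ψ l ih => simp [bigAnd, sat_and, ih]

lemma sat_bigOr {M : Kripke A P} {w : M.W} {l : List (Form A P)} :
    sat M w (bigOr l) ↔ ∃ ψ ∈ l, sat M w ψ := by
  induction l with
  | nil => simp [bigOr, Form.bot, sat_neg, sat_top]
  | cons ψ l ih => simp [bigOr, sat_or, ih]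

lemma sat_boxConj [Fintype A] {M : Kripke A P} {w : M.W} {ξ : A → Form A P} :
    sat M w (boxConj ξ) ↔ ∀ (a : A) (v : M.W), M.rel a w v → sat M v (ξ a) := by
  rw [boxConj, sat_bigAnd]
  constructor
  · intro h a v hv
    have := h (Form.box a (ξ a)) (by
      exact List.mem_map.2 ⟨a, Finset.mem_toList.2 (Finset.mem_univ a), rfl⟩)
    exact sat_box.1 this v hv
  · intro h ψ hψ
    obtain ⟨a, -, rfl⟩ := List.mem_map.1 hψ
    exact sat_box.2 (h a)

lemma sat_singleNeg {M : Kripke A P} {w : M.W} {ψ : Form A P} :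
    sat M w (singleNeg ψ) ↔ ¬ sat M w ψ := by
  cases ψ <;> simp [singleNeg, sat_neg]

lemma depth_singleNeg {ψ : Form A P} : depth (singleNeg ψ) = depth ψ := by
  cases ψ <;> simp [singleNeg, depth]

lemma mem_subf_self (φ : Form A P) : φ ∈ Subf φ := by
  cases φ <;> simp [Subf]

lemma subf_trans {χ ψ : Form A P} : ∀ {φ : Form A P}, ψ ∈ Subf φ → χ ∈ Subf ψ → χ ∈ Subf φ := by
  intro φ
  induction φ with
  | top => intro h1 h2; simp [Subf] at h1; subst h1; exact h2
  | atom p => intro h1 h2; simp [Subf] at h1; subst h1; exact h2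
  | neg τ ih =>
    intro h1 h2
    rw [Subf] at h1 ⊢
    rcases List.mem_cons.1 h1 with h | h
    · subst h; exact h2
    · exact List.mem_cons_of_mem _ (ih h h2)
  | or τ₁ τ₂ ih1 ih2 =>
    intro h1 h2
    rw [Subf] at h1 ⊢
    rcases List.mem_cons.1 h1 with h | h
    · subst h; exact h2
    · rcases List.mem_append.1 h with h | h
      · exact List.mem_cons_of_mem _ (List.mem_append_left _ (ih1 h h2))
      · exact List.mem_cons_of_mem _ (List.mem_append_right _ (ih2 h h2))
  | dia a τ ih =>
    intro h1 h2
    rw [Subf] at h1 ⊢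
    rcases List.mem_cons.1 h1 with h | h
    · subst h; exact h2
    · exact List.mem_cons_of_mem _ (ih h h2)

lemma depth_subf {ψ : Form A P} : ∀ {φ : Form A P}, ψ ∈ Subf φ → depth ψ ≤ depth φ := by
  intro φ
  induction φ with
  | top => intro h; simp [Subf] at h; subst h; exact le_refl _
  | atom p => intro h; simp [Subf] at h; subst h; exact le_refl _
  | neg τ ih =>
    intro h
    rw [Subf] at h
    rcases List.mem_cons.1 h with h | h
    · subst h; exact le_refl _
    · simpa [depth] using ih h
  | or τ₁ τ₂ ih1 ih2 =>
    intro h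
    rw [Subf] at h
    rcases List.mem_cons.1 h with h | h
    · subst h; exact le_refl _
    · rcases List.mem_append.1 h with h | h
      · exact le_trans (ih1 h) (by simp [depth])
      · exact le_trans (ih2 h) (by simp [depth])
  | dia a τ ih =>
    intro h
    rw [Subf] at h
    rcases List.mem_cons.1 h with h | h
    · subst h; exact le_refl _
    · exact le_trans (ih h) (by simp [depth])

lemma subf_neg {φ τ : Form A P} (h : Form.neg τ ∈ Subf φ) : τ ∈ Subf φ :=
  subf_trans h (by rw [Subf]; exact List.mem_cons_of_mem _ (mem_subf_self τ))

lemma subf_or_left {φ τ₁ τ₂ : Form A P} (h : Form.or τ₁ τ₂ ∈ Subf φ) : τ₁ ∈ Subf φ :=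
  subf_trans h (by rw [Subf]; exact List.mem_cons_of_mem _ (List.mem_append_left _ (mem_subf_self τ₁)))

lemma subf_or_right {φ τ₁ τ₂ : Form A P} (h : Form.or τ₁ τ₂ ∈ Subf φ) : τ₂ ∈ Subf φ :=
  subf_trans h (by rw [Subf]; exact List.mem_cons_of_mem _ (List.mem_append_right _ (mem_subf_self τ₂)))

lemma subf_dia {φ τ : Form A P} {a : A} (h : Form.dia a τ ∈ Subf φ) : τ ∈ Subf φ :=
  subf_trans h (by rw [Subf]; exact List.mem_cons_of_mem _ (mem_subf_self τ))

/-- The closure as a list. -/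
def clist (φ : Form A P) : List (Form A P) := Subf φ ++ (Subf φ).map singleNeg

lemma mem_clist {φ χ : Form A P} :
    χ ∈ clist φ ↔ χ ∈ Subf φ ∨ ∃ ψ ∈ Subf φ, χ = singleNeg ψ := by
  simp [clist, List.mem_append, List.mem_map, eq_comm]

lemma clist_sub_closure {φ χ : Form A P} (h : χ ∈ clist φ) : χ ∈ closureF φ :=
  mem_clist.1 h

lemma subf_clist {φ χ : Form A P} (h : χ ∈ Subf φ) : χ ∈ clist φ :=
  mem_clist.2 (Or.inl h)

lemma depth_clist {φ χ : Form A P} (h : χ ∈ clist φ) : depth χ ≤ depth φ := by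
  rcases mem_clist.1 h with h | ⟨ψ, hψ, rfl⟩
  · exact depth_subf h
  · rw [depth_singleNeg]; exact depth_subf hψ

lemma clist_neg {φ τ : Form A P} (h : Form.neg τ ∈ clist φ) : τ ∈ clist φ := by
  rcases mem_clist.1 h with h | ⟨ψ, hψ, he⟩
  · exact subf_clist (subf_neg h)
  · cases ψ with
    | neg ρ =>
      simp [singleNeg] at he; subst he
      exact subf_clist (subf_neg (subf_neg hψ))
    | top => simp [singleNeg] at he; subst he; exact subf_clist hψ
    | atom p => simp [singleNeg] at he; subst he; exact subf_clist hψ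
    | or τ₁ τ₂ => simp [singleNeg] at he; subst he; exact subf_clist hψ
    | dia a τ' => simp [singleNeg] at he; subst he; exact subf_clist hψ

lemma clist_or {φ τ₁ τ₂ : Form A P} (h : Form.or τ₁ τ₂ ∈ clist φ) :
    τ₁ ∈ clist φ ∧ τ₂ ∈ clist φ := by
  rcases mem_clist.1 h with h | ⟨ψ, hψ, he⟩
  · exact ⟨subf_clist (subf_or_left h), subf_clist (subf_or_right h)⟩
  · cases ψ with
    | neg ρ =>
      simp [singleNeg] at he; subst he
      have hρ : Form.or τ₁ τ₂ ∈ Subf φ := subf_neg hψ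
      exact ⟨subf_clist (subf_or_left hρ), subf_clist (subf_or_right hρ)⟩
    | top => simp [singleNeg] at he
    | atom p => simp [singleNeg] at he
    | or ρ₁ ρ₂ => simp [singleNeg] at he
    | dia a τ' => simp [singleNeg] at he

lemma clist_dia {φ τ : Form A P} {a : A} (h : Form.dia a τ ∈ clist φ) : τ ∈ clist φ := by
  rcases mem_clist.1 h with h | ⟨ψ, hψ, he⟩
  · exact subf_clist (subf_dia h)
  · cases ψ with
    | neg ρ =>
      simp [singleNeg] at he; subst he
      exact subf_clist (subf_dia (subf_neg hψ))
    | top => simp [singleNeg] at he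
    | atom p => simp [singleNeg] at he
    | or ρ₁ ρ₂ => simp [singleNeg] at he
    | dia a' τ' => simp [singleNeg] at he

lemma singleNeg_clist {φ χ : Form A P} (h : χ ∈ clist φ) : singleNeg χ ∈ clist φ := by
  rcases mem_clist.1 h with h | ⟨ψ, hψ, rfl⟩
  · exact mem_clist.2 (Or.inr ⟨χ, h, rfl⟩)
  · cases ψ with
    | neg ρ =>
      simp only [singleNeg]
      cases ρ with
      | neg σ => simp only [singleNeg]; exact subf_clist (subf_neg (subf_neg hψ))
      | top => simp only [singleNeg]; exact subf_clist hψ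
      | atom p => simp only [singleNeg]; exact subf_clist hψ
      | or τ₁ τ₂ => simp only [singleNeg]; exact subf_clist hψ
      | dia a τ => simp only [singleNeg]; exact subf_clist hψ
    | top => simp only [singleNeg]; exact subf_clist hψ
    | atom p => simp only [singleNeg]; exact subf_clist hψ
    | or τ₁ τ₂ => simp only [singleNeg]; exact subf_clist hψ
    | dia a τ => simp only [singleNeg]; exact subf_clist hψ

end BNF

namespace BNF
variable {A P : Type}

lemma sat_embed {M K : Kripke A P} (f : M.W → K.W)
    (hval : ∀ v p, K.val (f v) p ↔ M.val v p)
    (hfwd : ∀ a v v', M.rel a v v' → K.rel a (f v) (f v'))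
    (hbwd : ∀ a v z, K.rel a (f v) z → ∃ v', z = f v' ∧ M.rel a v v') :
    ∀ (ψ : Form A P) (v : M.W), sat K (f v) ψ ↔ sat M v ψ := by
  intro ψ
  induction ψ with
  | top => intro v; simp [sat]
  | atom p => intro v; exact hval v p
  | neg τ ih => intro v; simp only [sat_neg, ih v]
  | or τ₁ τ₂ ih1 ih2 => intro v; simp only [sat_or, ih1 v, ih2 v]
  | dia a τ ih =>
    intro v
    constructor
    · rintro ⟨z, hz, hsz⟩
      obtain ⟨v', rfl, hr⟩ := hbwd a v z hz
      exact ⟨v', hr, (ih v').1 hsz⟩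
    · rintro ⟨v', hr, hs⟩
      exact ⟨f v', hfwd a v v' hr, (ih v').2 hs⟩

/-- Disjoint union of `M` and `N` with one extra edge `w →_b u`. -/
def Kjoin (M N : Kripke A P) (b : A) (w : M.W) (u : N.W) : Kripke A P where
  W := M.W ⊕ N.W
  val x p := Sum.rec (fun v => M.val v p) (fun v => N.val v p) x
  rel a x y := (∃ v v', x = Sum.inl v ∧ y = Sum.inl v' ∧ M.rel a v v') ∨
      (∃ v v', x = Sum.inr v ∧ y = Sum.inr v' ∧ N.rel a v v') ∨
      (x = Sum.inl w ∧ a = b ∧ y = Sum.inr u)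
  actual := ∅

lemma Kjoin_inr {M N : Kripke A P} {b : A} {w : M.W} {u : N.W} (ψ : Form A P) (v : N.W) :
    sat (Kjoin M N b w u) (Sum.inr v) ψ ↔ sat N v ψ := by
  refine sat_embed (M := N) (K := Kjoin M N b w u) Sum.inr (fun _ _ => Iff.rfl) ?_ ?_ ψ v
  · intro a v v' h
    exact Or.inr (Or.inl ⟨v, v', rfl, rfl, h⟩)
  rintro a v z (⟨p, q, hp, hq, hr⟩ | ⟨p, q, hp, hq, hr⟩ | ⟨hp, hab, hq⟩)
  · exact absurd hp (by simp)
  · injection hp with hp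
    subst hp
    exact ⟨q, hq, hr⟩
  · exact absurd hp (by simp)

/-- Truth of closure formulas at `M`-worlds is unaffected by the extra edge,
provided `w` satisfies all the relevant diamonds. -/
lemma Kjoin_inl {φ : Form A P} {M N : Kripke A P} {b : A} {w : M.W} {u : N.W}
    (hdia : ∀ (a : A) (χ : Form A P), χ ∈ clist φ → depth χ < depth φ →
      satisfiable (singleNeg χ) → sat M w (Form.dia a (singleNeg χ))) :
    ∀ (ψ : Form A P), ψ ∈ clist φ → ∀ (v : M.W),
      sat (Kjoin M N b w u) (Sum.inl v) ψ ↔ sat M v ψ := by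
  intro ψ
  induction ψ with
  | top => intro _ v; simp [sat]
  | atom p => intro _ v; exact Iff.rfl
  | neg τ ih => intro hm v; exact not_congr (ih (clist_neg hm) v)
  | or τ₁ τ₂ ih1 ih2 =>
    intro hm v
    exact or_congr (ih1 (clist_or hm).1 v) (ih2 (clist_or hm).2 v)
  | dia a τ ih =>
    intro hm v
    have hτ : τ ∈ clist φ := clist_dia hm
    constructor
    · rintro ⟨z, hz, hsz⟩
      rcases hz with ⟨p, q, hp, hq, hr⟩ | ⟨p, q, hp, hq, hr⟩ | ⟨hp, hab, hq⟩
      · rw [Sum.inl.injEq] at hp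
        subst hp; subst hq
        exact ⟨q, hr, (ih hτ q).1 hsz⟩
      · exact absurd hp (by simp)
      · rw [Sum.inl.injEq] at hp
        subst hp; subst hq
        have hsN : sat N u τ := (Kjoin_inr τ u).1 hsz
        have h1 : singleNeg τ ∈ clist φ := singleNeg_clist hτ
        have h2 : depth (singleNeg τ) < depth φ := by
          rw [depth_singleNeg]
          have := depth_clist hm
          simp only [depth] at this
          omega
        have h3 : satisfiable (singleNeg (singleNeg τ)) :=
          ⟨N, u, sat_singleNeg.2 (by rw [sat_singleNeg]; exact not_not.2 hsN)⟩
        obtain ⟨v', hrel, hv'⟩ := sat_dia.1 (hdia a (singleNeg τ) h1 h2 h3)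
        refine ⟨v', hrel, ?_⟩
        have := sat_singleNeg.1 hv'
        rw [sat_singleNeg] at this
        exact not_not.1 this
    · rintro ⟨v', hr, hs⟩
      exact ⟨Sum.inl v', Or.inl ⟨v, v', rfl, rfl, hr⟩, (ih hτ v').2 hs⟩

/-- Root model: a fresh world with an `a₀`-edge into `M₁` and a `b`-edge into `N`. -/
def Kroot (M1 N : Kripke A P) (a0 b : A) (v1 : M1.W) (u : N.W) : Kripke A P where
  W := Option (M1.W ⊕ N.W)
  val x p := Option.rec False (fun s => Sum.rec (fun v => M1.val v p) (fun v => N.val v p) s) x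
  rel a x y := (∃ v v', x = some (Sum.inl v) ∧ y = some (Sum.inl v') ∧ M1.rel a v v') ∨
      (∃ v v', x = some (Sum.inr v) ∧ y = some (Sum.inr v') ∧ N.rel a v v') ∨
      (x = none ∧ a = a0 ∧ y = some (Sum.inl v1)) ∨
      (x = none ∧ a = b ∧ y = some (Sum.inr u))
  actual := ∅

lemma Kroot_inl {M1 N : Kripke A P} {a0 b : A} {v1 : M1.W} {u : N.W} (ψ : Form A P) (v : M1.W) :
    sat (Kroot M1 N a0 b v1 u) (some (Sum.inl v)) ψ ↔ sat M1 v ψ := by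
  refine sat_embed (M := M1) (K := Kroot M1 N a0 b v1 u) (fun v => some (Sum.inl v)) (fun _ _ => Iff.rfl) ?_ ?_ ψ v
  · intro a v v' h
    exact Or.inl ⟨v, v', rfl, rfl, h⟩
  rintro a v z (⟨p, q, hp, hq, hr⟩ | ⟨p, q, hp, hq, hr⟩ | ⟨hp, hab, hq⟩ | ⟨hp, hab, hq⟩)
  · simp only [Option.some.injEq, Sum.inl.injEq] at hp
    subst hp
    exact ⟨q, hq, hr⟩
  · exact absurd hp (by simp)
  · exact absurd hp (by simp)
  · exact absurd hp (by simp)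

lemma Kroot_inr {M1 N : Kripke A P} {a0 b : A} {v1 : M1.W} {u : N.W} (ψ : Form A P) (v : N.W) :
    sat (Kroot M1 N a0 b v1 u) (some (Sum.inr v)) ψ ↔ sat N v ψ := by
  refine sat_embed (M := N) (K := Kroot M1 N a0 b v1 u) (fun v => some (Sum.inr v)) (fun _ _ => Iff.rfl) ?_ ?_ ψ v
  · intro a v v' h
    exact Or.inr (Or.inl ⟨v, v', rfl, rfl, h⟩)
  rintro a v z (⟨p, q, hp, hq, hr⟩ | ⟨p, q, hp, hq, hr⟩ | ⟨hp, hab, hq⟩ | ⟨hp, hab, hq⟩)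
  · exact absurd hp (by simp)
  · simp only [Option.some.injEq, Sum.inr.injEq] at hp
    subst hp
    exact ⟨q, hq, hr⟩
  · exact absurd hp (by simp)
  · exact absurd hp (by simp)

end BNF

namespace BNF
variable {A P : Type}

open Classical in
/-- The diamond conjuncts of `α*`. -/
noncomputable def conjList [Fintype A] (φ : Form A P) : List (Form A P) :=
  (Finset.univ : Finset A).toList.flatMap fun a =>
    (clist φ).map fun χ =>
      if depth χ < depth φ ∧ satisfiable (singleNeg χ) then Form.dia a (singleNeg χ) else Form.top

noncomputable def alphaStar [Fintype A] (φ : Form A P) : Form A P := φ.and (bigAnd (conjList φ))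

open Classical in
lemma sat_alphaStar [Fintype A] {φ : Form A P} {M : Kripke A P} {w : M.W} :
    sat M w (alphaStar φ) ↔ sat M w φ ∧
      ∀ (a : A) (χ : Form A P), χ ∈ clist φ → depth χ < depth φ →
        satisfiable (singleNeg χ) → sat M w (Form.dia a (singleNeg χ)) := by
  rw [alphaStar, sat_and, sat_bigAnd]
  refine and_congr_right fun _ => ⟨fun h a χ hm h1 h2 => ?_, fun h ψ hψ => ?_⟩
  · have hmem : Form.dia a (singleNeg χ) ∈ conjList φ := by
      rw [conjList]
      refine List.mem_flatMap.2 ⟨a, Finset.mem_toList.2 (Finset.mem_univ a), ?_⟩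
      refine List.mem_map.2 ⟨χ, hm, ?_⟩
      rw [if_pos ⟨h1, h2⟩]
    exact h _ hmem
  · rw [conjList] at hψ
    obtain ⟨a, -, hψ⟩ := List.mem_flatMap.1 hψ
    obtain ⟨χ, hm, rfl⟩ := List.mem_map.1 hψ
    by_cases hc : depth χ < depth φ ∧ satisfiable (singleNeg χ)
    · rw [if_pos hc]; exact h a χ hm hc.1 hc.2
    · rw [if_neg hc]; exact sat_top

open Classical in
/-- `α_t`: a diamond guard disjoined with `φ`. -/
noncomputable def alphaOf (φ : Form A P) (t : A → Form A P) : Form A P :=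
  if h : ∃ a, satisfiable (singleNeg (t a)) then
    (Form.dia h.choose (singleNeg (t h.choose))).or φ
  else φ

/-- Candidate box contents. -/
def copts (φ : Form A P) : List (Form A P) :=
  Form.top :: (clist φ).filter (fun χ => decide (depth χ < depth φ))

noncomputable def tuples [Fintype A] (φ : Form A P) : List (A → Form A P) :=
  (Set.Finite.pi (fun _ : A => (copts φ).finite_toSet)).toFinset.toList

lemma mem_tuples [Fintype A] {φ : Form A P} {t : A → Form A P} :
    t ∈ tuples φ ↔ ∀ a, t a ∈ copts φ := by
  rw [tuples, Finset.mem_toList, Set.Finite.mem_toFinset, Set.mem_univ_pi]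
  rfl

lemma alphaOf_L0 (φ : Form A P) (t : A → Form A P)
    (h : ∃ a, satisfiable (singleNeg (t a))) : alphaOf φ t ∈ L0 := by
  intro _ b ψ hent
  by_contra hval
  simp only [valid, not_forall] at hval
  obtain ⟨N, u, hu⟩ := hval
  obtain ⟨M1, v1, hv1⟩ := h.choose_spec
  set K := Kroot M1 N h.choose b v1 u with hK
  have hroot : sat K (none) (alphaOf φ t) := by
    rw [alphaOf, dif_pos h]
    refine Or.inl ⟨some (Sum.inl v1), Or.inr (Or.inr (Or.inl ⟨rfl, rfl, rfl⟩)), ?_⟩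
    exact (Kroot_inl _ v1).2 hv1
  have hbox := hent K none hroot
  replace hbox := sat_box.1 hbox
  have := hbox (some (Sum.inr u)) (Or.inr (Or.inr (Or.inr ⟨rfl, rfl, rfl⟩)))
  exact hu ((Kroot_inr _ u).1 this)

lemma alphaStar_L0 [Fintype A] (φ : Form A P) : alphaStar φ ∈ L0 := by
  intro hsat b ψ hent
  by_contra hval
  simp only [valid, not_forall] at hval
  obtain ⟨N, u, hu⟩ := hval
  obtain ⟨M, w, hw⟩ := hsat
  rw [sat_alphaStar] at hw
  obtain ⟨hφ, hdia⟩ := hw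
  set K := Kjoin M N b w u with hK
  have hmain : ∀ χ ∈ clist φ, ∀ v : M.W, sat K (Sum.inl v) χ ↔ sat M v χ :=
    fun χ hm v => Kjoin_inl hdia χ hm v
  have hwK : sat K (Sum.inl w) (alphaStar φ) := by
    refine sat_alphaStar.2 ?_
    constructor
    · exact (hmain φ (subf_clist (mem_subf_self φ)) w).2 hφ
    · intro a χ hm h1 h2
      obtain ⟨v', hrel, hv'⟩ := sat_dia.1 (hdia a χ hm h1 h2)
      refine sat_dia.2 ⟨Sum.inl v', Or.inl ⟨w, v', rfl, rfl, hrel⟩, ?_⟩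
      exact (hmain (singleNeg χ) (singleNeg_clist hm) v').2 hv'
  have hbox := hent K (Sum.inl w) hwK
  replace hbox := sat_box.1 hbox
  have := hbox (Sum.inr u) (Or.inr (Or.inr ⟨rfl, rfl, rfl⟩))
  exact hu ((Kjoin_inr _ u).1 this)

open Classical in
lemma alphaOf_entails [Fintype A] (φ : Form A P) (t : A → Form A P) :
    entails ((alphaOf φ t).and (boxConj t)) φ := by
  intro M w hw
  rw [sat_and] at hw
  obtain ⟨h1, h2⟩ := hw
  rw [alphaOf] at h1
  split at h1
  · rcases sat_or.1 h1 with h | h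
    · exfalso
      obtain ⟨v, hrel, hv⟩ := sat_dia.1 h
      have := sat_boxConj.1 h2 _ v hrel
      exact (sat_singleNeg.1 hv) this
    · exact h
  · exact h1
end BNF


open BNF

/-- every formula `φ` is equivalent to a disjunctive box normal form
`⋁_m (α_m ∧ ⋀_{a∈A} □_a φ_m^a)` with `α_m ∈ L₀`, each disjunct satisfiable, each `φ_m^a`
of modal depth strictly less than that of `φ` (when `δ(φ) > 0`), and each `φ_m^a`
equivalent to a member of `C(φ) ∪ {⊤}`. -/
theorem box_normal_form_exists [Fintype A] (φ : Form A P) :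
    ∃ ds : List (Form A P × (A → Form A P)),
      equivF φ (bigOr (ds.map fun d => d.1.and (boxConj d.2))) ∧
      ∀ d ∈ ds, d.1 ∈ L0 ∧ satisfiable (d.1.and (boxConj d.2)) ∧
        ∀ a : A, (0 < depth φ → depth (d.2 a) < depth φ) ∧
          ∃ χ, (χ ∈ closureF φ ∨ χ = Form.top) ∧ equivF (d.2 a) χ := by 
  classical
  have hrefl : ∀ χ : Form A P, equivF χ χ := fun χ => ⟨fun M w h => h, fun M w h => h⟩
  set dstar : Form A P × (A → Form A P) := (alphaStar φ, fun _ => Form.top) with hdstar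
  set ds : List (Form A P × (A → Form A P)) :=
    ((tuples φ).filterMap fun t =>
      if ((∃ a, satisfiable (singleNeg (t a))) ∧ satisfiable ((alphaOf φ t).and (boxConj t)))
      then some (alphaOf φ t, t) else none) ++
    (if satisfiable (dstar.1.and (boxConj dstar.2)) then [dstar] else []) with hds
  have hmem : ∀ d, d ∈ ds ↔
      ((∃ t, t ∈ tuples φ ∧ ((∃ a, satisfiable (singleNeg (t a))) ∧
          satisfiable ((alphaOf φ t).and (boxConj t))) ∧ d = (alphaOf φ t, t)) ∨
       (satisfiable (dstar.1.and (boxConj dstar.2)) ∧ d = dstar)) := by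
    intro d
    rw [hds, List.mem_append, List.mem_filterMap]
    constructor
    · rintro (⟨t, ht, hd⟩ | hd)
      · left
        split at hd
        · injection hd with hd
          exact ⟨t, ht, by assumption, hd.symm⟩
        · exact absurd hd (by simp)
      · right
        split at hd
        · simp only [List.mem_singleton] at hd
          exact ⟨by assumption, hd⟩
        · exact absurd hd (by simp)
    · rintro (⟨t, ht, hc, rfl⟩ | ⟨hc, rfl⟩)
      · exact Or.inl ⟨t, ht, by rw [if_pos hc]⟩
      · exact Or.inr (by rw [if_pos hc]; exact List.mem_singleton.2 rfl)
  refine ⟨ds, ⟨?_, ?_⟩, ?_⟩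
  · -- φ entails the disjunction
    intro M w hw
    by_cases hgood : ∃ a, ∃ χ, χ ∈ clist φ ∧ depth χ < depth φ ∧
        satisfiable (singleNeg χ) ∧ sat M w (Form.box a χ)
    · have hex : ∀ a : A, ∃ χ, χ ∈ copts φ ∧ sat M w (Form.box a χ) ∧
          ((∃ χ', χ' ∈ clist φ ∧ depth χ' < depth φ ∧ satisfiable (singleNeg χ') ∧
            sat M w (Form.box a χ')) → satisfiable (singleNeg χ)) := by
        intro a
        by_cases h : ∃ χ', χ' ∈ clist φ ∧ depth χ' < depth φ ∧ satisfiable (singleNeg χ') ∧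
            sat M w (Form.box a χ')
        · obtain ⟨χ', h1, h2, h3, h4⟩ := h
          refine ⟨χ', ?_, h4, fun _ => h3⟩
          exact List.mem_cons.2 (Or.inr (List.mem_filter.2 ⟨h1, decide_eq_true h2⟩))
        · refine ⟨Form.top, List.mem_cons.2 (Or.inl rfl), ?_, fun hh => absurd hh h⟩
          exact sat_box.2 fun v _ => sat_top
      choose t ht1 ht2 ht3 using hex
      have ht : t ∈ tuples φ := mem_tuples.2 ht1
      obtain ⟨a0, χ0, hχ0⟩ := hgood
      have hwit : ∃ a, satisfiable (singleNeg (t a)) := ⟨a0, ht3 a0 ⟨χ0, hχ0⟩⟩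
      have hsatw : sat M w ((alphaOf φ t).and (boxConj t)) := by
        rw [sat_and]
        constructor
        · rw [alphaOf, dif_pos hwit]
          exact Or.inr hw
        · exact sat_boxConj.2 fun a v hrel => sat_box.1 (ht2 a) v hrel
      refine sat_bigOr.2 ⟨(alphaOf φ t).and (boxConj t), ?_, hsatw⟩
      refine List.mem_map.2 ⟨(alphaOf φ t, t), ?_, rfl⟩
      exact (hmem _).2 (Or.inl ⟨t, ht, ⟨hwit, ⟨M, w, hsatw⟩⟩, rfl⟩)
    · push_neg at hgood
      have hsatw : sat M w (dstar.1.and (boxConj dstar.2)) := by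
        rw [sat_and]
        constructor
        · rw [hdstar]
          refine sat_alphaStar.2 ⟨hw, fun a χ hm h1 h2 => ?_⟩
          have hnb : ¬ sat M w (Form.box a χ) := hgood a χ hm h1 h2
          rw [sat_box] at hnb
          push_neg at hnb
          obtain ⟨v, hrel, hv⟩ := hnb
          exact sat_dia.2 ⟨v, hrel, sat_singleNeg.2 hv⟩
        · exact sat_boxConj.2 fun a v _ => sat_top
      refine sat_bigOr.2 ⟨dstar.1.and (boxConj dstar.2), ?_, hsatw⟩
      refine List.mem_map.2 ⟨dstar, ?_, rfl⟩
      exact (hmem _).2 (Or.inr ⟨⟨M, w, hsatw⟩, rfl⟩)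
  · -- the disjunction entails φ
    intro M w hw
    obtain ⟨ψ, hψm, hψ⟩ := sat_bigOr.1 hw
    obtain ⟨d, hd, rfl⟩ := List.mem_map.1 hψm
    rcases (hmem d).1 hd with ⟨t, -, -, rfl⟩ | ⟨-, rfl⟩
    · exact alphaOf_entails φ t M w hψ
    · rw [hdstar] at hψ
      rw [sat_and] at hψ
      exact (sat_alphaStar.1 hψ.1).1
  · -- conditions on each disjunct
    intro d hd
    rcases (hmem d).1 hd with ⟨t, ht, ⟨hwit, hs⟩, rfl⟩ | ⟨hs, rfl⟩
    · refine ⟨alphaOf_L0 φ t hwit, hs, fun a => ?_⟩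
      have hta := mem_tuples.1 ht a
      rcases List.mem_cons.1 hta with h | h
      · refine ⟨fun h0 => ?_, Form.top, Or.inr rfl, by show equivF (t a) Form.top; rw [h]; exact hrefl _⟩
        show depth (t a) < depth φ
        rw [h]
        exact h0
      · obtain ⟨hcl, hdp⟩ := List.mem_filter.1 h
        refine ⟨fun _ => of_decide_eq_true hdp, t a, Or.inl (clist_sub_closure hcl), hrefl _⟩
    · refine ⟨alphaStar_L0 φ, hs, fun a => ?_⟩
      refine ⟨fun h0 => ?_, Form.top, Or.inr rfl, hrefl _⟩
      exact h0
end

section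
/- Let Φ be a finite set of modal formulas of depth at most k ≥ 0 and let P be the set of propositions occurring in Φ. Then the set E_k^P of canonical formulas of depth k over P is Φ-regular (each canonical formula either entails or refutes each member of Φ) and a Φ-basis (each member of Φ is equivalent to the disjunction of the canonical formulas entailing it). -/
variable {A P : Type}

/-- The cover modality `∇_a Ψ := □_a(⋁Ψ) ∧ ⋀_{ψ∈Ψ} ◇_a ψ` (for a finite list `Ψ`). -/
def cover (a : A) (l : List (Form A P)) : Form A P :=
  (Form.box a (bigOr l)).and (bigAnd (l.map (Form.dia a)))

/-- The complete conjunction of literals over `P` determined by `f : P → Bool`. -/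
noncomputable def litConj [Fintype P] (f : P → Bool) : Form A P :=
  bigAnd ((Finset.univ : Finset P).toList.map fun p =>
    bif f p then Form.atom p else Form.neg (Form.atom p))

/-- Shifted canonical formula sets: `canonS 0 = E₋₁^P = {⊤}`, `canonS (k+1) = E_k^P`,
where `E₀^P` is the set of complete conjunctions of literals over `P`, and
`E_k^P = {ψ ∧ ⋀_{a∈A} ∇_a Φ_a : ψ ∈ E₀^P, Φ_a ⊆ E_{k-1}^P}` for `k > 0`. -/
noncomputable def canonS [Fintype A] [Fintype P] : ℕ → Set (Form A P)
  | 0 => {Form.top}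
  | 1 => {φ | ∃ f : P → Bool, φ = litConj f}
  | (k+2) => {φ | ∃ (f : P → Bool) (F : A → List (Form A P)),
      (∀ a, ∀ χ ∈ F a, χ ∈ canonS (k+1)) ∧
      φ = (litConj f).and (bigAnd ((Finset.univ : Finset A).toList.map fun a =>
        cover a (F a)))}

section Aux

open Classical

lemma sat_and {M : Kripke A P} {w : M.W} {φ ψ : Form A P} :
    sat M w (φ.and ψ) ↔ sat M w φ ∧ sat M w ψ := by
  simp [Form.and, sat]

lemma sat_box {M : Kripke A P} {w : M.W} {a : A} {φ : Form A P} :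
    sat M w (Form.box a φ) ↔ ∀ v, M.rel a w v → sat M v φ := by
  simp [Form.box, sat]

lemma sat_bigAnd {M : Kripke A P} {w : M.W} {l : List (Form A P)} :
    sat M w (bigAnd l) ↔ ∀ χ ∈ l, sat M w χ := by
  induction l with
  | nil => simp [bigAnd, sat]
  | cons φ l ih => simp [bigAnd, sat_and, ih]

lemma sat_bigOr {M : Kripke A P} {w : M.W} {l : List (Form A P)} :
    sat M w (bigOr l) ↔ ∃ χ ∈ l, sat M w χ := by
  induction l with
  | nil => simp [bigOr, Form.bot, sat]
  | cons φ l ih => simp [bigOr, sat, ih]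

lemma sat_litConj [Fintype P] {M : Kripke A P} {w : M.W} {f : P → Bool} :
    sat M w (litConj f) ↔ ∀ p, (M.val w p ↔ f p = true) := by
  rw [litConj, sat_bigAnd]
  constructor
  · intro h p
    have := h (bif f p then Form.atom p else Form.neg (Form.atom p))
      (List.mem_map.2 ⟨p, Finset.mem_toList.2 (Finset.mem_univ p), rfl⟩)
    cases hf : f p <;> simp_all [sat]
  · intro h χ hχ
    obtain ⟨p, -, rfl⟩ := List.mem_map.1 hχ
    cases hf : f p <;> simp_all [sat]

lemma sat_cover {M : Kripke A P} {w : M.W} {a : A} {l : List (Form A P)} :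
    sat M w (cover a l) ↔
      (∀ v, M.rel a w v → ∃ χ ∈ l, sat M v χ) ∧
      (∀ χ ∈ l, ∃ v, M.rel a w v ∧ sat M v χ) := by
  rw [cover, sat_and, sat_box]
  simp only [sat_bigOr, sat_bigAnd, List.mem_map]
  constructor
  · rintro ⟨h1, h2⟩
    refine ⟨h1, fun χ hχ => ?_⟩
    exact h2 (Form.dia a χ) ⟨χ, hχ, rfl⟩
  · rintro ⟨h1, h2⟩
    refine ⟨h1, ?_⟩
    rintro ψ ⟨χ, hχ, rfl⟩
    exact h2 χ hχ

/-- Agreement: two worlds satisfying a common canonical formula of level `n+1`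
agree on all formulas of depth at most `n`. -/
lemma canon_agree [Fintype A] [Fintype P] :
    ∀ (n : ℕ) (ξ : Form A P), ξ ∈ canonS (A := A) (P := P) (n+1) →
    ∀ (M : Kripke A P) (w : M.W) (N : Kripke A P) (v : N.W),
      sat M w ξ → sat N v ξ →
      ∀ φ : Form A P, depth φ ≤ n → (sat M w φ ↔ sat N v φ) := by
  intro n
  induction n with
  | zero =>
    rintro ξ ⟨f, rfl⟩ M w N v hw hv φ hφ
    rw [sat_litConj] at hw hv
    induction φ with
    | top => simp [sat]
    | atom p => simp only [sat]; rw [hw p, hv p]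
    | neg ψ ih => simp only [sat]; rw [ih hφ]
    | or ψ χ ih1 ih2 =>
      simp only [depth, max_le_iff] at hφ
      simp only [sat]; rw [ih1 hφ.1, ih2 hφ.2]
    | dia a ψ ih => simp [depth] at hφ
  | succ n ih =>
    rintro ξ ⟨f, F, hF, rfl⟩ M w N v hw hv φ hφ
    rw [sat_and, sat_bigAnd] at hw hv
    obtain ⟨hw1, hw2⟩ := hw
    obtain ⟨hv1, hv2⟩ := hv
    rw [sat_litConj] at hw1 hv1
    have hcw : ∀ a : A, sat M w (cover a (F a)) := fun a =>
      hw2 _ (List.mem_map.2 ⟨a, Finset.mem_toList.2 (Finset.mem_univ a), rfl⟩)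
    have hcv : ∀ a : A, sat N v (cover a (F a)) := fun a =>
      hv2 _ (List.mem_map.2 ⟨a, Finset.mem_toList.2 (Finset.mem_univ a), rfl⟩)
    clear hw2 hv2
    induction φ with
    | top => simp [sat]
    | atom p => simp only [sat]; rw [hw1 p, hv1 p]
    | neg ψ ihφ =>
      have hφ' : depth ψ ≤ n + 1 := hφ
      simp only [sat]; exact not_congr (ihφ hφ')
    | or ψ χ ih1 ih2 =>
      simp only [depth, max_le_iff] at hφ
      simp only [sat]; exact or_congr (ih1 hφ.1) (ih2 hφ.2)
    | dia a ψ ihφ =>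
      simp only [depth, Nat.add_le_add_iff_right] at hφ
      have hW := sat_cover.1 (hcw a)
      have hV := sat_cover.1 (hcv a)
      constructor
      · rintro ⟨w', hrel, hsat⟩
        obtain ⟨χ, hχ, hχw⟩ := hW.1 w' hrel
        obtain ⟨v', hrel', hχv⟩ := hV.2 χ hχ
        exact ⟨v', hrel', (ih χ (hF a χ hχ) M w' N v' hχw hχv ψ hφ).1 hsat⟩
      · rintro ⟨v', hrel, hsat⟩
        obtain ⟨χ, hχ, hχv⟩ := hV.1 v' hrel
        obtain ⟨w', hrel', hχw⟩ := hW.2 χ hχ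
        exact ⟨w', hrel', (ih χ (hF a χ hχ) M w' N v' hχw hχv ψ hφ).2 hsat⟩

/-- Existence: there is a finite list of canonical formulas of level `n`
covering every pointed model. -/
lemma canon_exists [Fintype A] [Fintype P] :
    ∀ n : ℕ, ∃ E : List (Form A P), (∀ ξ ∈ E, ξ ∈ canonS (A := A) (P := P) n) ∧
      ∀ (M : Kripke A P) (w : M.W), ∃ ξ ∈ E, sat M w ξ := by
  intro n
  induction n with
  | zero =>
    refine ⟨[Form.top], ?_, fun M w => ⟨Form.top, by simp, trivial⟩⟩
    intro ξ hξ
    simp at hξ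
    simp [hξ, canonS]
  | succ n ih =>
    haveI := Classical.decEq P
    haveI := Classical.decEq A
    haveI := Classical.decEq (Form A P)
    match n, ih with
    | 0, _ =>
      refine ⟨(Finset.univ : Finset (P → Bool)).toList.map litConj, ?_, ?_⟩
      · intro ξ hξ
        obtain ⟨f, -, rfl⟩ := List.mem_map.1 hξ
        exact ⟨f, rfl⟩
      · intro M w
        refine ⟨litConj (fun p => decide (M.val w p)), ?_, ?_⟩
        · exact List.mem_map.2 ⟨_, Finset.mem_toList.2 (Finset.mem_univ _), rfl⟩
        · rw [sat_litConj]; intro p; simp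
    | (m+1), ih =>
      obtain ⟨E', hE'c, hE'cov⟩ := ih
      let S : Finset (List (Form A P)) := E'.sublists.toFinset
      refine ⟨((Finset.univ : Finset ((P → Bool) × (A → {l // l ∈ S}))).toList).map
        (fun q => (litConj q.1).and (bigAnd ((Finset.univ : Finset A).toList.map fun a =>
          cover a ((q.2 a).1)))), ?_, ?_⟩
      · intro ξ hξ
        obtain ⟨q, -, rfl⟩ := List.mem_map.1 hξ
        refine ⟨q.1, fun a => (q.2 a).1, ?_, rfl⟩
        intro a χ hχ
        have hsub : (q.2 a).1 ∈ E'.sublists := List.mem_toFinset.1 (q.2 a).2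
        exact hE'c χ ((List.mem_sublists.1 hsub).mem hχ)
      · intro M w
        set f : P → Bool := fun p => decide (M.val w p) with hf
        set F : A → List (Form A P) :=
          fun a => E'.filter (fun χ => decide (∃ u, M.rel a w u ∧ sat M u χ)) with hFdef
        have hFS : ∀ a, F a ∈ S := fun a =>
          List.mem_toFinset.2 (List.mem_sublists.2 List.filter_sublist)
        refine ⟨(litConj f).and (bigAnd ((Finset.univ : Finset A).toList.map fun a =>
          cover a (F a))), ?_, ?_⟩
        · exact List.mem_map.2 ⟨(f, fun a => ⟨F a, hFS a⟩),
            Finset.mem_toList.2 (Finset.mem_univ _), rfl⟩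
        · rw [sat_and, sat_bigAnd]
          constructor
          · rw [sat_litConj]; intro p; simp [hf]
          · intro χ hχ
            obtain ⟨a, -, rfl⟩ := List.mem_map.1 hχ
            rw [sat_cover]
            constructor
            · intro u hrel
              obtain ⟨χ, hχE, hχsat⟩ := hE'cov M u
              refine ⟨χ, ?_, hχsat⟩
              rw [hFdef]
              exact List.mem_filter.2 ⟨hχE, by simp; exact ⟨u, hrel, hχsat⟩⟩
            · intro χ hχ
              have := (List.mem_filter.1 hχ).2
              simpa using this

end Aux

/-- for a finite set `Φ` of formulas of depth at most `k`, the canonical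
formulas `E_k^P` are `Φ`-regular and a `Φ`-basis: each member of `Φ` is equivalent to the
disjunction of the canonical formulas entailing it. -/
theorem canon_regular_basis [Fintype A] [Fintype P] (k : ℕ) (Φ : Finset (Form A P))
    (hd : ∀ φ ∈ Φ, depth φ ≤ k) :
    Regular (↑Φ : Set (Form A P)) (canonS (A := A) (P := P) (k+1)) ∧
    ∀ φ ∈ Φ, ∀ (M : Kripke A P) (w : M.W),
      sat M w φ ↔ ∃ ξ ∈ canonS (A := A) (P := P) (k+1), entails ξ φ ∧ sat M w ξ := by
  constructor
  · intro φ hφ ξ hξ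
    by_cases h : entails ξ φ
    · exact Or.inl h
    · right
      rw [entails] at h
      push_neg at h
      obtain ⟨M, w, hw, hnφ⟩ := h
      intro N v hv
      show ¬ sat N v φ
      intro hvφ
      exact hnφ ((canon_agree k ξ hξ N v M w hv hw φ (hd φ hφ)).1 hvφ)
  · intro φ hφ M w
    constructor
    · intro hw
      obtain ⟨E, hEc, hEcov⟩ := canon_exists (A := A) (P := P) (k+1)
      obtain ⟨ξ, hξE, hξw⟩ := hEcov M w
      refine ⟨ξ, hEc ξ hξE, ?_, hξw⟩
      intro N v hv
      exact (canon_agree k ξ (hEc ξ hξE) N v M w hv hξw φ (hd φ hφ)).2 hw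
    · rintro ⟨ξ, -, hent, hξw⟩
      exact hent M w hξw
end

section
/- Let A be a finite action model. The bisimulation-refinement partitions Ω_k^A of the event set stabilize: there exists k such that Ω_k^A = Ω_{k+1}^A, and the quotient action model [A]_k (events are the blocks, preconditions inherited, E₁ →_a E₂ iff some event of E₁ has an a-successor in E₂ with jointly satisfiable precondition/diamond-precondition) is action-bisimilar to A. -/
variable {A P : Type}

/-- The bisimulation-refinement relations `∼_k` on the events of an action model:
`x ∼₀ y` iff `Pre(x) ≡ Pre(y)`; `x ∼_{k+1} y` iff `x ∼_k y` and for every block of `∼_k`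
and every label `a`, `Q_a(x)` meets the block iff `Q_a(y)` does. -/
def simRel (𝔄 : ActionModel A P) : ℕ → 𝔄.E → 𝔄.E → Prop
  | 0, x, y => equivF (𝔄.pre x) (𝔄.pre y)
  | (k+1), x, y => simRel 𝔄 k x y ∧
      ∀ (a : A) (z : 𝔄.E),
        (∃ x' ∈ Qset 𝔄 a x, simRel 𝔄 k z x') ↔ (∃ y' ∈ Qset 𝔄 a y, simRel 𝔄 k z y')

/-- The quotient action model `[𝔄]_k`: events are the blocks of `∼_k`, the precondition of a
block is the precondition of a (choice of) member, blocks are related iff some members are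
`Q`-related, and a block is actual iff it meets the actual events. -/
noncomputable def quotModel (𝔄 : ActionModel A P) (k : ℕ) : ActionModel A P where
  E := {S : Set 𝔄.E // ∃ x, S = {y | simRel 𝔄 k x y}}
  pre S := 𝔄.pre S.2.choose
  rel a S T := ∃ x ∈ S.1, ∃ y ∈ T.1, y ∈ Qset 𝔄 a x
  actual := {S | ∃ x ∈ S.1, x ∈ 𝔄.actual}

/-! Both claims rest on two facts: the relations `∼_k` form a decreasing chain of equivalence
relations on a finite set, so the chain becomes constant; and once `∼_k = ∼_{k+1}`, any two
members of a block have `Q`-successors in the same blocks, which is exactly the Zag condition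
for the membership relation between events and blocks. -/

theorem exists_eq_succ_of_antitone {α : Type*} [PartialOrder α] [Finite α] {r : ℕ → α}
    (hr : Antitone r) : ∃ k, r k = r (k + 1) := by
  obtain ⟨i, j, hij, hr_eq⟩ := Finite.exists_ne_map_eq_of_infinite r
  wlog hlt : i < j generalizing i j
  · exact this j i hij.symm hr_eq.symm (hij.lt_or_gt.resolve_left hlt)
  exact ⟨i, le_antisymm (hr_eq ▸ hr hlt) (hr (Nat.le_succ i))⟩

theorem equivF_equivalence : Equivalence (equivF : Form A P → Form A P → Prop) :=
  ⟨fun _ => ⟨fun _ _ h => h, fun _ _ h => h⟩, fun h => ⟨h.2, h.1⟩,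
    fun h₁ h₂ => ⟨fun M w hw => h₂.1 M w (h₁.1 M w hw), fun M w hw => h₁.2 M w (h₂.2 M w hw)⟩⟩

section Refinement

variable (𝔄 : ActionModel A P)

theorem simRel_equivalence : ∀ k, Equivalence (simRel 𝔄 k)
  | 0 => ⟨fun _ => equivF_equivalence.refl _, equivF_equivalence.symm, equivF_equivalence.trans⟩
  | k + 1 =>
    have ih := simRel_equivalence k
    ⟨fun _ => ⟨ih.refl _, fun _ _ => Iff.rfl⟩, fun h => ⟨ih.symm h.1, fun a z => (h.2 a z).symm⟩,
      fun h₁ h₂ => ⟨ih.trans h₁.1 h₂.1, fun a z => (h₁.2 a z).trans (h₂.2 a z)⟩⟩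

theorem simRel_antitone : Antitone (simRel 𝔄) :=
  antitone_nat_of_succ_le fun _ _ _ h => h.1

theorem equivF_pre_of_simRel {x y : 𝔄.E} : ∀ {k}, simRel 𝔄 k x y → equivF (𝔄.pre x) (𝔄.pre y)
  | 0, h => h
  | _ + 1, h => equivF_pre_of_simRel h.1

theorem exists_simRel_eq_succ [Finite 𝔄.E] : ∃ k, simRel 𝔄 k = simRel 𝔄 (k + 1) :=
  exists_eq_succ_of_antitone (simRel_antitone 𝔄)

variable {𝔄}

theorem exists_mem_Qset_simRel_of_simRel_succ {k : ℕ} {a : A} {x u v : 𝔄.E}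
    (hxu : simRel 𝔄 (k + 1) x u) (hv : v ∈ Qset 𝔄 a u) : ∃ x' ∈ Qset 𝔄 a x, simRel 𝔄 k v x' :=
  (hxu.2 a v).2 ⟨v, hv, (simRel_equivalence 𝔄 k).refl v⟩

end Refinement

namespace quotModel

def blockOf (𝔄 : ActionModel A P) (k : ℕ) (x : 𝔄.E) : (quotModel 𝔄 k).E :=
  ⟨{y | simRel 𝔄 k x y}, x, rfl⟩

variable {𝔄 : ActionModel A P} {k : ℕ}

theorem mem_blockOf_self (x : 𝔄.E) : x ∈ (blockOf 𝔄 k x).1 :=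
  (simRel_equivalence 𝔄 k).refl x

theorem mem_iff (T : (quotModel 𝔄 k).E) {x : 𝔄.E} : x ∈ T.1 ↔ simRel 𝔄 k T.2.choose x :=
  Set.ext_iff.mp T.2.choose_spec x

theorem simRel_of_mem {T : (quotModel 𝔄 k).E} {x y : 𝔄.E} (hx : x ∈ T.1) (hy : y ∈ T.1) :
    simRel 𝔄 k x y :=
  (simRel_equivalence 𝔄 k).trans ((simRel_equivalence 𝔄 k).symm ((mem_iff T).1 hx))
    ((mem_iff T).1 hy)

theorem mem_of_simRel {T : (quotModel 𝔄 k).E} {x y : 𝔄.E} (hx : x ∈ T.1)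
    (hxy : simRel 𝔄 k x y) : y ∈ T.1 :=
  (mem_iff T).2 ((simRel_equivalence 𝔄 k).trans ((mem_iff T).1 hx) hxy)

theorem equivF_pre_of_mem {T : (quotModel 𝔄 k).E} {x : 𝔄.E} (hx : x ∈ T.1) :
    equivF (𝔄.pre x) ((quotModel 𝔄 k).pre T) :=
  equivF_pre_of_simRel 𝔄 ((simRel_equivalence 𝔄 k).symm ((mem_iff T).1 hx))

theorem isActBisim_mem (hk : simRel 𝔄 k = simRel 𝔄 (k + 1)) :
    IsActBisim 𝔄 (quotModel 𝔄 k) fun x T => x ∈ T.1 := by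
  intro x T hxT
  refine ⟨equivF_pre_of_mem hxT, ?zig, ?zag⟩
  case zig =>
    intro a x' hxx' hsat
    exact ⟨blockOf 𝔄 k x', ⟨x, hxT, x', mem_blockOf_self x', hxx', hsat⟩, mem_blockOf_self x'⟩
  case zag =>
    rintro a T' ⟨u, huT, v, hvT', hv⟩ -
    have hxu : simRel 𝔄 (k + 1) x u := hk ▸ simRel_of_mem hxT huT
    obtain ⟨x', hx', hvx'⟩ := exists_mem_Qset_simRel_of_simRel_succ hxu hv
    exact ⟨x', hx'.1, mem_of_simRel hvT' hvx'⟩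

end quotModel

/-- for a finite action model the refinement partitions stabilize at some `k`
with `∼_k = ∼_{k+1}`, and the quotient `[𝔄]_k` is action-bisimilar to `𝔄`. -/
theorem refinement_stabilizes_and_bisim (𝔄 : ActionModel A P) [Fintype 𝔄.E] :
    ∃ k, (∀ x y, simRel 𝔄 k x y ↔ simRel 𝔄 (k+1) x y) ∧
      ActBisimilar 𝔄 (quotModel 𝔄 k) := by
  obtain ⟨k, hk⟩ := exists_simRel_eq_succ 𝔄
  refine ⟨k, fun x y => hk ▸ Iff.rfl, fun x T => x ∈ T.1, quotModel.isActBisim_mem hk,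
    ?zig0, ?zag0⟩
  case zig0 =>
    exact fun x hx => ⟨quotModel.blockOf 𝔄 k x, ⟨x, quotModel.mem_blockOf_self x, hx⟩,
      quotModel.mem_blockOf_self x⟩
  case zag0 => exact fun T ⟨x, hxT, hx⟩ => ⟨x, hx, hxT⟩
end
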